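/- arXiv:2604.23833 — 4 statements merged into one kernel-verified Lean document; each statement's English description precedes it below -/
import Mathlib

section
/- Let Σ be an N×N real symmetric positive definite matrix with D = diag(Σ) and correlation matrix C = D^{-1/2} Σ D^{-1/2}. Let v ∈ ℝ^N be a nonzero eigenvector of C with eigenvalue λ > 0, and set μ = D^{1/2} v. Then for every γ ∈ [0,1], dir(P_γ^{-1} μ, Σ^{-1} μ) = 0; that is, the shrinkage solution P_γ^{-1}μ is collinear with the Markowitz solution Σ^{-1}μ for every shrinkage intensity γ. -/
open Matrix

/-- Direction error between two vectors: `dir(x,y) = 1 − (xᵀy)²/(‖x‖²‖y‖²)`,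
written with Euclidean dot products (`x ⬝ᵥ x = ‖x‖²`). -/
noncomputable def dirErr {N : ℕ} (x y : Fin N → ℝ) : ℝ :=
  1 - (x ⬝ᵥ y) ^ 2 / ((x ⬝ᵥ x) * (y ⬝ᵥ y))

/-- Let `S` be an `N×N` real SPD matrix with `D = diag(S)` and
correlation matrix `C = D^{-1/2} S D^{-1/2}`. Let `v` be a nonzero eigenvector of `C`
with eigenvalue `λ > 0` and set `μ = D^{1/2} v`. Then for every `γ ∈ [0,1]`,
`dir(P_γ⁻¹ μ, S⁻¹ μ) = 0`, i.e. the shrinkage solution is collinear with the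
Markowitz solution for every shrinkage intensity. -/
theorem invariant_ray_zero_direction_error {N : ℕ} (S : Matrix (Fin N) (Fin N) ℝ)
    (hS : S.PosDef)
    (D Dhalf Dinvhalf C : Matrix (Fin N) (Fin N) ℝ)
    (hD : D = Matrix.diagonal (fun i => S i i))
    (hDhalf : Dhalf = Matrix.diagonal (fun i => Real.sqrt (S i i)))
    (hDinvhalf : Dinvhalf = Matrix.diagonal (fun i => (Real.sqrt (S i i))⁻¹))
    (hC : C = Dinvhalf * S * Dinvhalf)
    (v : Fin N → ℝ) (hv0 : v ≠ 0) (lam : ℝ) (hlam : 0 < lam)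
    (hv : C.mulVec v = lam • v)
    (μ : Fin N → ℝ) (hμ : μ = Dhalf.mulVec v)
    (γ : ℝ) (hγ0 : 0 ≤ γ) (hγ1 : γ ≤ 1) :
    dirErr (((1 - γ) • D + γ • S)⁻¹.mulVec μ) (S⁻¹.mulVec μ) = 0 := by
  -- diagonal entries of S are positive
  have hdiag : ∀ i, 0 < S i i := by
    intro i
    have h1 : (Pi.single i 1 : Fin N → ℝ) ≠ 0 := by
      intro h
      simpa using congrFun h i
    have := hS.dotProduct_mulVec_pos h1
    simpa [dotProduct, Matrix.mulVec, Pi.single_apply, Finset.sum_ite_eq,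
      Finset.mul_sum] using this
  have hsqrtpos : ∀ i, 0 < Real.sqrt (S i i) := fun i => Real.sqrt_pos.2 (hdiag i)
  -- Dhalf * Dinvhalf = 1
  have hhalfinv : Dhalf * Dinvhalf = 1 := by
    rw [hDhalf, hDinvhalf, Matrix.diagonal_mul_diagonal]
    have : (fun i => Real.sqrt (S i i) * (Real.sqrt (S i i))⁻¹) = fun _ : Fin N => (1:ℝ) :=
      funext fun i => mul_inv_cancel₀ (hsqrtpos i).ne'
    rw [this, Matrix.diagonal_one]
  have hDD : Dhalf * Dhalf = D := by
    rw [hDhalf, hD, Matrix.diagonal_mul_diagonal]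
    have : (fun i => Real.sqrt (S i i) * Real.sqrt (S i i)) = fun i => S i i :=
      funext fun i => Real.mul_self_sqrt (hdiag i).le
    rw [this]
  set w : Fin N → ℝ := Dinvhalf.mulVec v with hw
  have hDhw : Dhalf.mulVec w = v := by
    rw [hw, Matrix.mulVec_mulVec, hhalfinv, Matrix.one_mulVec]
  have hw0 : w ≠ 0 := by
    intro h
    apply hv0
    rw [← hDhw, h, Matrix.mulVec_zero]
  -- S w = lam • μ
  have hSw : S.mulVec w = lam • μ := by
    have h1 : Dinvhalf.mulVec (S.mulVec w) = lam • v := by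
      rw [hw, Matrix.mulVec_mulVec, Matrix.mulVec_mulVec, ← hC, hv]
    have h2 := congrArg Dhalf.mulVec h1
    rw [Matrix.mulVec_mulVec, hhalfinv, Matrix.one_mulVec, Matrix.mulVec_smul] at h2
    rw [h2, hμ]
  -- D w = μ
  have hDw : D.mulVec w = μ := by
    rw [← hDD, ← Matrix.mulVec_mulVec, hDhw, hμ]
  -- positive definiteness of P
  have hDpd : D.PosDef := hD ▸ Matrix.PosDef.diagonal hdiag
  set P : Matrix (Fin N) (Fin N) ℝ := (1 - γ) • D + γ • S with hP
  have hPpd : P.PosDef := by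
    refine Matrix.PosDef.of_dotProduct_mulVec_pos ?_ ?_
    · rw [Matrix.IsHermitian, Matrix.conjTranspose_add, Matrix.conjTranspose_smul,
        Matrix.conjTranspose_smul, hDpd.1, hS.1]
      simp [hP]
    · intro x hx
      have h1 := hDpd.dotProduct_mulVec_pos hx
      have h2 := hS.dotProduct_mulVec_pos hx
      rw [hP, Matrix.add_mulVec, Matrix.smul_mulVec, Matrix.smul_mulVec,
        dotProduct_add, dotProduct_smul, dotProduct_smul, smul_eq_mul, smul_eq_mul]
      rcases eq_or_lt_of_le hγ1 with h | h
      · rw [h]; simpa using h2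
      · have := mul_nonneg hγ0 h2.le
        nlinarith
  -- P w = k • μ
  set k : ℝ := (1 - γ) + γ * lam with hk
  have hkpos : 0 < k := by
    rcases eq_or_lt_of_le hγ1 with h | h
    · rw [hk, h]; simpa using hlam
    · have := mul_nonneg hγ0 hlam.le
      rw [hk]; nlinarith
  have hPw : P.mulVec w = k • μ := by
    rw [hP, Matrix.add_mulVec, Matrix.smul_mulVec, Matrix.smul_mulVec,
      hDw, hSw, smul_smul, hk, add_smul]
  -- inverses
  have hPdet : IsUnit P.det := hPpd.det_pos.ne'.isUnit
  have hSdet : IsUnit S.det := hS.det_pos.ne'.isUnit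
  have hPinv : P⁻¹.mulVec μ = k⁻¹ • w := by
    have hμ' : μ = k⁻¹ • P.mulVec w := by
      rw [hPw, smul_smul, inv_mul_cancel₀ hkpos.ne', one_smul]
    rw [hμ', Matrix.mulVec_smul, Matrix.mulVec_mulVec, Matrix.nonsing_inv_mul _ hPdet,
      Matrix.one_mulVec]
  have hSinv : S⁻¹.mulVec μ = lam⁻¹ • w := by
    have hμ' : μ = lam⁻¹ • S.mulVec w := by
      rw [hSw, smul_smul, inv_mul_cancel₀ hlam.ne', one_smul]
    rw [hμ', Matrix.mulVec_smul, Matrix.mulVec_mulVec, Matrix.nonsing_inv_mul _ hSdet,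
      Matrix.one_mulVec]
  -- final computation
  have htnn : (0:ℝ) ≤ w ⬝ᵥ w := Finset.sum_nonneg fun i _ => mul_self_nonneg _
  have ht : (0:ℝ) < w ⬝ᵥ w := by
    rcases htnn.lt_or_eq with h | h
    · exact h
    · exact absurd ((dotProduct_self_eq_zero).1 h.symm) hw0
  rw [hPinv, hSinv, dirErr]
  simp only [smul_dotProduct, dotProduct_smul, smul_eq_mul]
  have hk0 : k ≠ 0 := hkpos.ne'
  have hl0 : lam ≠ 0 := hlam.ne'
  have ht0 : (w ⬝ᵥ w : ℝ) ≠ 0 := ht.ne'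
  field_simp
  ring
end

section
/- Let Σ be an N×N real symmetric positive definite matrix with D = diag(Σ), E = Σ − D, P_γ = (1−γ)D + γΣ for γ ∈ [0,1], and let μ ∈ ℝ^N with w* = Σ^{-1}μ ≠ 0 and ŵ(γ) = P_γ^{-1}μ ≠ 0. Set u(γ) = P_γ^{-1} E w* and let u_⊥(γ) = u(γ) − (⟨u(γ), w*⟩/‖w*‖²) w* be the component of u(γ) orthogonal to w*. Then the exact identity dir(ŵ(γ), w*) = (1−γ)² · ‖u_⊥(γ)‖² / ‖ŵ(γ)‖² holds. -/
open Matrix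

private lemma posDef_smul_real {n : Type*} [Fintype n] {A : Matrix n n ℝ} (hA : A.PosDef)
    {c : ℝ} (hc : 0 < c) : (c • A).PosDef := by
  refine Matrix.PosDef.of_dotProduct_mulVec_pos ?_ (fun x hx => ?_)
  · rw [Matrix.IsHermitian, Matrix.conjTranspose_smul, hA.1.eq, star_trivial]
  · rw [smul_mulVec, dotProduct_smul, smul_eq_mul]
    exact mul_pos hc (hA.dotProduct_mulVec_pos hx)

private lemma posSemidef_smul_real {n : Type*} [Fintype n] {A : Matrix n n ℝ} (hA : A.PosDef)
    {c : ℝ} (hc : 0 ≤ c) : (c • A).PosSemidef := by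
  refine Matrix.PosSemidef.of_dotProduct_mulVec_nonneg ?_ (fun x => ?_)
  · rw [Matrix.IsHermitian, Matrix.conjTranspose_smul, hA.1.eq, star_trivial]
  · rw [smul_mulVec, dotProduct_smul, smul_eq_mul]
    exact mul_nonneg hc (hA.posSemidef.dotProduct_mulVec_nonneg x)

/-- Let `S` be SPD with `D = diag(S)`, `E = S − D`,
`P_γ = (1−γ)D + γS` for `γ ∈ [0,1]`, and let `μ` with `w* = S⁻¹μ ≠ 0` and
`ŵ(γ) = P_γ⁻¹μ ≠ 0`. Set `u(γ) = P_γ⁻¹ E w*` and let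
`u_⊥(γ) = u(γ) − (⟨u(γ),w*⟩/‖w*‖²) w*`. Then the exact identity
`dir(ŵ(γ), w*) = (1−γ)² · ‖u_⊥(γ)‖² / ‖ŵ(γ)‖²` holds. -/
theorem direction_error_exact_identity {N : ℕ} (S : Matrix (Fin N) (Fin N) ℝ)
    (hS : S.PosDef) (μ : Fin N → ℝ) (γ : ℝ) (hγ0 : 0 ≤ γ) (hγ1 : γ ≤ 1)
    (D E P : Matrix (Fin N) (Fin N) ℝ)
    (hD : D = Matrix.diagonal (fun i => S i i))
    (hE : E = S - D)
    (hP : P = (1 - γ) • D + γ • S)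
    (wstar what u uperp : Fin N → ℝ)
    (hws : wstar = S⁻¹.mulVec μ) (hws0 : wstar ≠ 0)
    (hwh : what = P⁻¹.mulVec μ) (hwh0 : what ≠ 0)
    (hu : u = P⁻¹.mulVec (E.mulVec wstar))
    (hup : uperp = u - ((u ⬝ᵥ wstar) / (wstar ⬝ᵥ wstar)) • wstar) :
    dirErr what wstar = (1 - γ) ^ 2 * (uperp ⬝ᵥ uperp) / (what ⬝ᵥ what) := by
  -- diagonal entries of S are positive
  have hSii : ∀ i, 0 < S i i := by
    intro i
    have h := hS.dotProduct_mulVec_pos (x := Pi.single i 1) (by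
      simp [Function.ne_iff])
    simpa [dotProduct, Pi.single_apply, mulVec, Finset.sum_ite_eq] using h
  have hDpd : D.PosDef := hD ▸ Matrix.PosDef.diagonal hSii
  -- P is positive definite
  have hPpd : P.PosDef := by
    rcases eq_or_lt_of_le hγ1 with h1 | h1
    · subst h1; simpa [hP] using hS
    · have ht : 0 < 1 - γ := by linarith
      rw [hP]
      exact (posDef_smul_real hDpd ht).add_posSemidef (posSemidef_smul_real hS hγ0)
  have hPdet : IsUnit P.det := isUnit_iff_ne_zero.mpr (ne_of_gt hPpd.det_pos)
  have hSdet : IsUnit S.det := isUnit_iff_ne_zero.mpr (ne_of_gt hS.det_pos)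
  -- basic mulVec identities
  have hSw : S.mulVec wstar = μ := by
    rw [hws, Matrix.mulVec_mulVec, Matrix.mul_nonsing_inv S hSdet, Matrix.one_mulVec]
  have hPw : P.mulVec what = μ := by
    rw [hwh, Matrix.mulVec_mulVec, Matrix.mul_nonsing_inv P hPdet, Matrix.one_mulVec]
  have hPu : P.mulVec u = E.mulVec wstar := by
    rw [hu, Matrix.mulVec_mulVec, Matrix.mul_nonsing_inv P hPdet, Matrix.one_mulVec]
  -- key decomposition: what = wstar + (1-γ) • u
  have hPS : P + (1 - γ) • E = S := by rw [hP, hE]; module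
  have hinj : Function.Injective P.mulVec := Matrix.mulVec_injective_iff_isUnit.2
    ((Matrix.isUnit_iff_isUnit_det P).mpr hPdet)
  have hkey : what = wstar + (1 - γ) • u := by
    apply hinj
    rw [hPw, Matrix.mulVec_add, Matrix.mulVec_smul, hPu, ← hSw, ← hPS, Matrix.add_mulVec,
      Matrix.smul_mulVec]
  -- scalars
  set t : ℝ := 1 - γ with hT
  set W : ℝ := wstar ⬝ᵥ wstar with hWdef
  set a : ℝ := u ⬝ᵥ wstar with hadef
  have hnn : ∀ v : Fin N → ℝ, 0 ≤ v ⬝ᵥ v := fun v =>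
    Finset.sum_nonneg fun i _ => mul_self_nonneg _
  have hW : 0 < W := lt_of_le_of_ne (hnn wstar)
    (fun h => hws0 (dotProduct_self_eq_zero.mp h.symm))
  -- uperp orthogonal to wstar
  have hperp : uperp ⬝ᵥ wstar = 0 := by
    rw [hup, sub_dotProduct, smul_dotProduct, smul_eq_mul, ← hWdef, ← hadef,
      div_mul_cancel₀ _ (ne_of_gt hW)]
    ring
  -- decompose what
  set c : ℝ := 1 + t * (a / W) with hcdef
  have hdecomp : what = c • wstar + t • uperp := by
    rw [hkey, hup, hcdef]
    module
  have hww : what ⬝ᵥ wstar = c * W := by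
    rw [hdecomp, add_dotProduct, smul_dotProduct, smul_dotProduct, hperp,
      ← hWdef]
    simp
  set U : ℝ := uperp ⬝ᵥ uperp with hUdef
  have hperp' : wstar ⬝ᵥ uperp = 0 := by rw [dotProduct_comm]; exact hperp
  have hwhat : what ⬝ᵥ what = c ^ 2 * W + t ^ 2 * U := by
    rw [hdecomp]
    simp only [add_dotProduct, dotProduct_add, smul_dotProduct,
      dotProduct_smul, hperp, hperp', ← hWdef, ← hUdef, smul_eq_mul]
    ring
  have hwhatpos : 0 < what ⬝ᵥ what := by
    exact lt_of_le_of_ne (hnn what)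
      (fun h => hwh0 (dotProduct_self_eq_zero.mp h.symm))
  rw [dirErr, hww, hwhat, ← hWdef]
  rw [hwhat] at hwhatpos
  field_simp
  ring
end

section
/- Let Σ be an N×N real symmetric positive definite matrix with D = diag(Σ), E = Σ − D, P_γ = (1−γ)D + γΣ for a fixed γ ∈ [0,1), and let μ ∈ ℝ^N with w* = Σ^{-1}μ ≠ 0, ŵ(γ) = P_γ^{-1}μ ≠ 0, and u(γ) = P_γ^{-1} E w* ≠ 0. Let u_⊥(γ) be the component of u(γ) orthogonal to w* and set G(γ, w*) = ‖u_⊥(γ)‖²/‖u(γ)‖² ∈ [0,1]. Then dir(ŵ(γ), w*) ≤ (1−γ)² · ‖P_γ^{-1}E‖_op² · (‖w*‖²/‖ŵ(γ)‖²) · G(γ, w*), where ‖·‖_op is the operator norm induced by the Euclidean norm; moreover G(γ, w*) = 0 if and only if P_γ^{-1} E w* is collinear with w*. -/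
open Matrix

/-- The operator norm of a real matrix induced by the Euclidean norm. -/
noncomputable def euclideanOpNorm {m n : ℕ} (M : Matrix (Fin m) (Fin n) ℝ) : ℝ :=
  ‖LinearMap.toContinuousLinearMap (Matrix.toEuclideanLin M)‖

lemma dot_self_nonneg {N : ℕ} (v : Fin N → ℝ) : 0 ≤ v ⬝ᵥ v :=
  Finset.sum_nonneg fun _ _ => mul_self_nonneg _

lemma dot_self_pos {N : ℕ} {v : Fin N → ℝ} (hv : v ≠ 0) : 0 < v ⬝ᵥ v :=
  lt_of_le_of_ne (dot_self_nonneg v) fun h => hv (dotProduct_self_eq_zero.mp h.symm)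

lemma norm_symm_sq {N : ℕ} (v : Fin N → ℝ) :
    ‖(WithLp.equiv 2 (Fin N → ℝ)).symm v‖ ^ 2 = v ⬝ᵥ v := by
  rw [EuclideanSpace.norm_eq, Real.sq_sqrt (Finset.sum_nonneg fun i _ => sq_nonneg _)]
  simp [dotProduct, Real.norm_eq_abs, sq_abs, sq]

/-- **direction-error bound.** With `S` SPD, `D = diag(S)`, `E = S − D`,
`P_γ = (1−γ)D + γS` for fixed `γ ∈ [0,1)`, `w* = S⁻¹μ ≠ 0`, `ŵ(γ) = P_γ⁻¹μ ≠ 0`,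
`u(γ) = P_γ⁻¹ E w* ≠ 0`, `u_⊥(γ)` the component of `u(γ)` orthogonal to `w*`, and
`G(γ,w*) = ‖u_⊥(γ)‖²/‖u(γ)‖² ∈ [0,1]`:
`dir(ŵ(γ), w*) ≤ (1−γ)² ‖P_γ⁻¹E‖_op² (‖w*‖²/‖ŵ(γ)‖²) G(γ,w*)`, and
`G(γ,w*) = 0` iff `P_γ⁻¹ E w*` is collinear with `w*`. -/
theorem direction_error_bound {N : ℕ} (S : Matrix (Fin N) (Fin N) ℝ)
    (hS : S.PosDef) (μ : Fin N → ℝ) (γ : ℝ) (hγ0 : 0 ≤ γ) (hγ1 : γ < 1)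
    (D E P : Matrix (Fin N) (Fin N) ℝ)
    (hD : D = Matrix.diagonal (fun i => S i i))
    (hE : E = S - D)
    (hP : P = (1 - γ) • D + γ • S)
    (wstar what u uperp : Fin N → ℝ)
    (hws : wstar = S⁻¹.mulVec μ) (hws0 : wstar ≠ 0)
    (hwh : what = P⁻¹.mulVec μ) (hwh0 : what ≠ 0)
    (hu : u = P⁻¹.mulVec (E.mulVec wstar)) (hu0 : u ≠ 0)
    (hup : uperp = u - ((u ⬝ᵥ wstar) / (wstar ⬝ᵥ wstar)) • wstar)
    (G : ℝ) (hG : G = (uperp ⬝ᵥ uperp) / (u ⬝ᵥ u)) :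
    (0 ≤ G ∧ G ≤ 1) ∧
    dirErr what wstar ≤
      (1 - γ) ^ 2 * euclideanOpNorm (P⁻¹ * E) ^ 2 *
        ((wstar ⬝ᵥ wstar) / (what ⬝ᵥ what)) * G ∧
    (G = 0 ↔ ∃ t : ℝ, u = t • wstar) := by
  have ha : (0:ℝ) < wstar ⬝ᵥ wstar := dot_self_pos hws0
  have hb : (0:ℝ) < what ⬝ᵥ what := dot_self_pos hwh0
  have hq : (0:ℝ) < u ⬝ᵥ u := dot_self_pos hu0
  -- D is positive definite
  have hDpos : D.PosDef := by
    rw [hD]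
    refine Matrix.posDef_diagonal_iff.mpr fun i => ?_
    have hx : (Pi.single i 1 : Fin N → ℝ) ≠ 0 := by
      intro h
      have := congrFun h i
      simp at this
    have h2 := hS.dotProduct_mulVec_pos hx
    simp only [star_trivial, mulVec_single, dotProduct, Pi.single_apply, ite_mul, one_mul,
      zero_mul, mul_one, Finset.sum_ite_eq, Finset.mem_univ, if_true] at h2
    simpa using h2
  -- P is positive definite
  have hPpos : P.PosDef := by
    refine Matrix.posDef_iff_dotProduct_mulVec.mpr ⟨?_, ?_⟩
    · rw [hP]
      have hDH := hDpos.1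
      have hSH := hS.1
      simp only [Matrix.IsHermitian, conjTranspose_add, conjTranspose_smul] at *
      rw [hDH, hSH]
      simp [star_trivial]
    · intro x hx
      rw [hP, add_mulVec, smul_mulVec, smul_mulVec, dotProduct_add,
        dotProduct_smul, dotProduct_smul]
      have h1 := hDpos.dotProduct_mulVec_pos hx
      have h2 := hS.posSemidef.dotProduct_mulVec_nonneg x
      have h1γ : (0:ℝ) < 1 - γ := by linarith
      exact add_pos_of_pos_of_nonneg (smul_pos h1γ h1) (smul_nonneg hγ0 h2)
  have hPdet : IsUnit P.det := (Matrix.isUnit_iff_isUnit_det _).mp hPpos.isUnit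
  have hSdet : IsUnit S.det := (Matrix.isUnit_iff_isUnit_det _).mp hS.isUnit
  -- μ = S wstar
  have hμ : μ = S.mulVec wstar := by
    rw [hws, mulVec_mulVec, Matrix.mul_nonsing_inv _ hSdet, one_mulVec]
  -- S = P + (1-γ) E
  have hSP : S = P + (1 - γ) • E := by
    rw [hP, hE]; module
  -- key identity : what = wstar + (1-γ) u
  have hkey : what = wstar + (1 - γ) • u := by
    rw [hwh, hμ, hSP, add_mulVec, smul_mulVec, mulVec_add, mulVec_smul,
      mulVec_mulVec, Matrix.nonsing_inv_mul _ hPdet, one_mulVec, hu]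
  have hp : uperp ⬝ᵥ uperp = u ⬝ᵥ u - (u ⬝ᵥ wstar) ^ 2 / (wstar ⬝ᵥ wstar) := by
    rw [hup]
    simp only [sub_dotProduct, dotProduct_sub, smul_dotProduct, dotProduct_smul,
      dotProduct_comm wstar u, smul_eq_mul]
    field_simp
    ring
  have hpnn : 0 ≤ uperp ⬝ᵥ uperp := dot_self_nonneg uperp
  have hpq : uperp ⬝ᵥ uperp ≤ u ⬝ᵥ u := by
    rw [hp]
    exact sub_le_self _ (div_nonneg (sq_nonneg _) ha.le)
  have hGbounds : 0 ≤ G ∧ G ≤ 1 := by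
    constructor
    · rw [hG]; exact div_nonneg hpnn hq.le
    · rw [hG, div_le_one hq]; exact hpq
  refine ⟨hGbounds, ?_, ?_⟩
  · -- main inequality
    have hc : what ⬝ᵥ wstar = wstar ⬝ᵥ wstar + (1 - γ) * (u ⬝ᵥ wstar) := by
      rw [hkey, add_dotProduct, smul_dotProduct, smul_eq_mul]
    have hb2 : what ⬝ᵥ what = wstar ⬝ᵥ wstar + 2 * (1 - γ) * (u ⬝ᵥ wstar)
        + (1 - γ) ^ 2 * (u ⬝ᵥ u) := by
      rw [hkey]
      simp only [dotProduct_add, add_dotProduct, smul_dotProduct, dotProduct_smul,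
        dotProduct_comm wstar u, smul_eq_mul]
      ring
    -- operator norm bound : q ≤ K^2 * a
    have huM : u = (P⁻¹ * E).mulVec wstar := by rw [hu, ← mulVec_mulVec]
    have hqa : u ⬝ᵥ u ≤ euclideanOpNorm (P⁻¹ * E) ^ 2 * (wstar ⬝ᵥ wstar) := by
      set L := LinearMap.toContinuousLinearMap (Matrix.toEuclideanLin (P⁻¹ * E)) with hL'
      have hLx : L ((WithLp.equiv 2 (Fin N → ℝ)).symm wstar)
          = (WithLp.equiv 2 (Fin N → ℝ)).symm u := by
        rw [huM]; rfl
      have h1 := L.le_opNorm ((WithLp.equiv 2 (Fin N → ℝ)).symm wstar)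
      have h2 := pow_le_pow_left₀ (norm_nonneg _) h1 2
      rw [hLx, norm_symm_sq, mul_pow, norm_symm_sq] at h2
      exact h2
    -- dirErr = (1-γ)^2 p / b
    have hbne2 : wstar ⬝ᵥ wstar + 2 * (1 - γ) * (u ⬝ᵥ wstar)
        + (1 - γ) ^ 2 * (u ⬝ᵥ u) ≠ 0 := by rw [← hb2]; exact hb.ne'
    have hdir : dirErr what wstar
        = (1 - γ) ^ 2 * (uperp ⬝ᵥ uperp) / (what ⬝ᵥ what) := by
      unfold dirErr
      rw [hc, hp, hb2]
      rw [one_sub_div (mul_ne_zero hbne2 ha.ne'), div_eq_div_iff (mul_ne_zero hbne2 ha.ne') hbne2]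
      field_simp
      ring
    rw [hdir, hG]
    have h1 : uperp ⬝ᵥ uperp ≤ euclideanOpNorm (P⁻¹ * E) ^ 2 * (wstar ⬝ᵥ wstar)
        * ((uperp ⬝ᵥ uperp) / (u ⬝ᵥ u)) := by
      rw [mul_div_assoc', le_div_iff₀ hq]
      nlinarith
    have h2 : (1 - γ) ^ 2 * (uperp ⬝ᵥ uperp)
        ≤ (1 - γ) ^ 2 * (euclideanOpNorm (P⁻¹ * E) ^ 2 * (wstar ⬝ᵥ wstar)
          * ((uperp ⬝ᵥ uperp) / (u ⬝ᵥ u))) :=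
      mul_le_mul_of_nonneg_left h1 (sq_nonneg _)
    calc (1 - γ) ^ 2 * (uperp ⬝ᵥ uperp) / (what ⬝ᵥ what)
        ≤ (1 - γ) ^ 2 * (euclideanOpNorm (P⁻¹ * E) ^ 2 * (wstar ⬝ᵥ wstar)
            * ((uperp ⬝ᵥ uperp) / (u ⬝ᵥ u))) / (what ⬝ᵥ what) :=
          (div_le_div_iff_of_pos_right hb).mpr h2
      _ = (1 - γ) ^ 2 * euclideanOpNorm (P⁻¹ * E) ^ 2 *
            ((wstar ⬝ᵥ wstar) / (what ⬝ᵥ what)) * ((uperp ⬝ᵥ uperp) / (u ⬝ᵥ u)) := by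
          ring
  · -- G = 0 iff collinear
    constructor
    · intro h0
      rw [hG] at h0
      have hp0 : uperp ⬝ᵥ uperp = 0 := by
        rcases div_eq_zero_iff.mp h0 with h | h
        · exact h
        · exact absurd h hq.ne'
      have hz : uperp = 0 := dotProduct_self_eq_zero.mp hp0
      refine ⟨(u ⬝ᵥ wstar) / (wstar ⬝ᵥ wstar), ?_⟩
      have h3 := hup ▸ hz
      rw [sub_eq_zero] at h3
      exact h3
    · rintro ⟨t, ht⟩
      have hz : uperp = 0 := by
        rw [hup, ht]
        simp only [smul_dotProduct, smul_eq_mul]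
        rw [mul_div_assoc, div_self ha.ne']
        simp [smul_smul]
      rw [hG, hz]
      simp
end

section
/- Fix γ ∈ [0,1], vectors ŵ_L ∈ ℝ^{n_L}, ŵ_R ∈ ℝ^{n_R}, matrices Σ_LL (n_L×n_L symmetric), Σ_RR (n_R×n_R symmetric), Σ_LR (n_L×n_R), and signals μ_L ∈ ℝ^{n_L}, μ_R ∈ ℝ^{n_R}. Define v_L = ŵ_LᵀΣ_LLŵ_L, v_R = ŵ_RᵀΣ_RRŵ_R, s_L = ŵ_Lᵀμ_L, s_R = ŵ_Rᵀμ_R, c = ŵ_LᵀΣ_LRŵ_R, Δ = v_L v_R − γ²c², and assume Δ ≠ 0. Set α_L = (v_R s_L − γ c s_R)/Δ and α_R = (v_L s_R − γ c s_L)/Δ. For any k > 0, replacing ŵ_L by k·ŵ_L (which replaces Δ by k²Δ ≠ 0) replaces α_L by α_L/k and leaves α_R unchanged; consequently the stacked pre-normalisation vector (α_L·ŵ_L, α_R·ŵ_R) ∈ ℝ^{n_L + n_R} is invariant under the rescaling, and if (α_L, α_R) ≠ (0,0) the L¹-normalised stacked vector (obtained by dividing by |α_L| + |α_R|, computed with the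 rescaled budgets) is a strictly positive scalar multiple of the L¹-normalised stacked vector computed from the original budgets. -/
open Matrix

/-- **ray invariance of the `L¹`-normalised node split under child
rescaling.** With the 2×2 between-branch Cramer's-rule budgets
`α_L = (v_R s_L − γ c s_R)/Δ`, `α_R = (v_L s_R − γ c s_L)/Δ`, `Δ = v_L v_R − γ²c² ≠ 0`,
replacing `ŵ_L` by `k·ŵ_L` (`k > 0`) replaces `Δ` by `k²Δ ≠ 0`, replaces `α_L` by
`α_L/k`, leaves `α_R` unchanged, leaves the stacked pre-normalisation vector
`(α_L ŵ_L, α_R ŵ_R)` invariant, and (if `(α_L, α_R) ≠ (0,0)`) the `L¹`-normalised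
stacked vector computed from the rescaled budgets is a strictly positive scalar
multiple of the one computed from the original budgets. -/
theorem l1_node_split_ray_invariance {nL nR : ℕ}
    (γ : ℝ) (hγ0 : 0 ≤ γ) (hγ1 : γ ≤ 1)
    (wL : Fin nL → ℝ) (wR : Fin nR → ℝ)
    (SLL : Matrix (Fin nL) (Fin nL) ℝ) (hSLL : SLL.IsSymm)
    (SRR : Matrix (Fin nR) (Fin nR) ℝ) (hSRR : SRR.IsSymm)
    (SLR : Matrix (Fin nL) (Fin nR) ℝ)
    (μL : Fin nL → ℝ) (μR : Fin nR → ℝ)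
    (k : ℝ) (hk : 0 < k)
    (vL vR sL sR c Δ αL αR : ℝ)
    (hvL : vL = wL ⬝ᵥ SLL.mulVec wL) (hvR : vR = wR ⬝ᵥ SRR.mulVec wR)
    (hsL : sL = wL ⬝ᵥ μL) (hsR : sR = wR ⬝ᵥ μR)
    (hc : c = wL ⬝ᵥ SLR.mulVec wR)
    (hΔ : Δ = vL * vR - γ ^ 2 * c ^ 2) (hΔ0 : Δ ≠ 0)
    (hαL : αL = (vR * sL - γ * c * sR) / Δ)
    (hαR : αR = (vL * sR - γ * c * sL) / Δ)
    (vL' sL' c' Δ' αL' αR' : ℝ)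
    (hvL' : vL' = (k • wL) ⬝ᵥ SLL.mulVec (k • wL))
    (hsL' : sL' = (k • wL) ⬝ᵥ μL)
    (hc' : c' = (k • wL) ⬝ᵥ SLR.mulVec wR)
    (hΔ' : Δ' = vL' * vR - γ ^ 2 * c' ^ 2)
    (hαL' : αL' = (vR * sL' - γ * c' * sR) / Δ')
    (hαR' : αR' = (vL' * sR - γ * c' * sL') / Δ') :
    Δ' = k ^ 2 * Δ ∧ Δ' ≠ 0 ∧ αL' = αL / k ∧ αR' = αR ∧
    Sum.elim (αL' • (k • wL)) (αR' • wR) = Sum.elim (αL • wL) (αR • wR) ∧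
    ((αL, αR) ≠ (0, 0) →
      ∃ t : ℝ, 0 < t ∧
        (|αL'| + |αR'|)⁻¹ • Sum.elim (αL' • (k • wL)) (αR' • wR)
          = t • ((|αL| + |αR|)⁻¹ • Sum.elim (αL • wL) (αR • wR))) := by

  have hk0 : k ≠ 0 := ne_of_gt hk
  have hvLk : vL' = k ^ 2 * vL := by
    rw [hvL', hvL]
    simp only [smul_dotProduct, Matrix.mulVec_smul, dotProduct_smul, smul_eq_mul]
    ring
  have hsLk : sL' = k * sL := by
    rw [hsL', hsL, smul_dotProduct, smul_eq_mul]
  have hck : c' = k * c := by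
    rw [hc', hc, smul_dotProduct, smul_eq_mul]
  have hΔk : Δ' = k ^ 2 * Δ := by
    rw [hΔ', hΔ, hvLk, hck]; ring
  have hΔ'0 : Δ' ≠ 0 := by
    rw [hΔk]; exact mul_ne_zero (pow_ne_zero 2 hk0) hΔ0
  have hαLk : αL' = αL / k := by
    rw [hαL', hαL, hΔk, hsLk, hck]
    field_simp
  have hαRk : αR' = αR := by
    rw [hαR', hαR, hΔk, hsLk, hck, hvLk]
    rw [div_eq_div_iff (by rw [← hΔk]; exact hΔ'0) hΔ0]
    ring
  have hstack : Sum.elim (αL' • (k • wL)) (αR' • wR) = Sum.elim (αL • wL) (αR • wR) := by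
    rw [hαLk, hαRk, smul_smul, div_mul_cancel₀ _ hk0]
  refine ⟨hΔk, hΔ'0, hαLk, hαRk, hstack, ?_⟩
  intro hne
  have hLR : αL ≠ 0 ∨ αR ≠ 0 := by
    by_contra h
    push_neg at h
    exact hne (by simp [h.1, h.2])
  have habs : 0 < |αL| + |αR| := by
    rcases hLR with h | h
    · have := abs_pos.mpr h; have := abs_nonneg αR; linarith
    · have := abs_pos.mpr h; have := abs_nonneg αL; linarith
  have habs' : 0 < |αL'| + |αR'| := by
    rw [hαLk, hαRk, abs_div, abs_of_pos hk]
    rcases hLR with h | h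
    · have := abs_pos.mpr h; positivity
    · have := abs_pos.mpr h; have := abs_nonneg αL; have := div_nonneg (abs_nonneg αL) hk.le; linarith
  refine ⟨(|αL'| + |αR'|)⁻¹ * (|αL| + |αR|), by positivity, ?_⟩
  rw [hstack, smul_smul]
  congr 1
  field_simp
end
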